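/- arXiv:1705.03316 — 2 statements merged into one kernel-verified Lean document; each statement's English description precedes it below -/
import Mathlib

section
/- Let p be a prime, q = p² + p + 1, and let B ⊆ ℤ_q satisfy R_{B,−B}(n) = 1 for all nonzero n ∈ ℤ_q. Then the number of n ∈ ℤ_q with R_B(n) = 1 equals p + 1, the number of n ∈ ℤ_q with R_B(n) = 2 equals p(p+1)/2, and the number of n ∈ ℤ_q with R_B(n) = 0 equals (p² − p)/2. -/
/-!
If every nonzero difference is represented exactly once, counting all pairs of `B × B` by their
difference gives `|B|² = |B| + (q - 1)`, so `|B| = p + 1`. Uniqueness of differences turns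
`a + b = c + d` (i.e. `a - d = c - b`) into `{a, b} = {c, d}`, so `R_B(n) ≤ 2`, and `R_B(n) = 1`
exactly for the `p + 1` distinct doubles `2b`. Writing `tₖ` for the number of `n` with
`R_B(n) = k`, the remaining counts follow from `t₁ + 2 t₂ = ∑ R_B(n) = |B|²` and `t₀ + t₁ + t₂ = q`.
-/

/-- `repFn2 A B g` is the number of ordered pairs `(a, b) ∈ A × B` with `a + b = g`. -/
def repFn2 {G : Type*} [AddCommGroup G] [DecidableEq G] (A B : Finset G) (g : G) : ℕ :=
  ((A ×ˢ B).filter fun p => p.1 + p.2 = g).card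

/-- `repFn A g` is the number of ordered pairs `(a, a') ∈ A × A` with `a + a' = g`. -/
def repFn {G : Type*} [AddCommGroup G] [DecidableEq G] (A : Finset G) (g : G) : ℕ :=
  repFn2 A A g

open Finset

namespace Finset

variable {ι : Type*} (s : Finset ι) (f : ι → ℕ)

theorem card_eq_card_filter_eq_zero_add_one_add_two (hf : ∀ i ∈ s, f i ≤ 2) :
    #s = #{i ∈ s | f i = 0} + #{i ∈ s | f i = 1} + #{i ∈ s | f i = 2} := by
  rw [card_eq_sum_card_fiberwise (t := range 3) fun i hi => mem_range.mpr (by linarith [hf i hi])]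
  simp [sum_range_succ]

theorem sum_eq_card_filter_eq_one_add_two_mul (hf : ∀ i ∈ s, f i ≤ 2) :
    ∑ i ∈ s, f i = #{i ∈ s | f i = 1} + 2 * #{i ∈ s | f i = 2} := by
  rw [← sum_fiberwise_of_maps_to (t := range 3) fun i hi => mem_range.mpr (by linarith [hf i hi])]
  simp [sum_range_succ, sum_const_nat (fun i hi => (mem_filter.mp hi).2), mul_comm]

end Finset

variable {G : Type*} [AddCommGroup G] [DecidableEq G]

theorem repFn2_image_neg (A C : Finset G) (g : G) :
    repFn2 A (C.image fun c => -c) g = #{x ∈ A ×ˢ C | x.1 - x.2 = g} := by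
  refine card_nbij' (fun x => (x.1, -x.2)) (fun x => (x.1, -x.2)) ?_ ?_ ?_ ?_ <;>
    rintro ⟨a, c⟩ <;> simp +contextual [sub_eq_add_neg]
  rintro ha c hc rfl rfl
  simpa

theorem repFn2_image_neg_self_zero (A : Finset G) : repFn2 A (A.image fun a => -a) 0 = #A := by
  simp [repFn2_image_neg, sub_eq_zero, ← diag_eq_filter]

theorem sum_repFn2 [Fintype G] (A C : Finset G) : ∑ g, repFn2 A C g = #A * #C := by
  rw [← card_product]
  exact (card_eq_sum_card_fiberwise fun _ _ => mem_univ _).symm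

theorem sum_repFn [Fintype G] (A : Finset G) : ∑ g, repFn A g = #A * #A :=
  sum_repFn2 A A

theorem swap_mem_filter_add_eq {A : Finset G} {g : G} {x : G × G}
    (hx : x ∈ {x ∈ A ×ˢ A | x.1 + x.2 = g}) : x.swap ∈ {x ∈ A ×ˢ A | x.1 + x.2 = g} := by
  simp_all [add_comm]

/-- Every nonzero element is a difference `a - b` of elements of `B` in exactly one way. -/
def IsPerfectDifferenceSet (B : Finset G) : Prop :=
  ∀ g : G, g ≠ 0 → repFn2 B (B.image fun b => -b) g = 1

namespace IsPerfectDifferenceSet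

variable {B : Finset G} {a b c d : G}

theorem eq_of_sub_eq_sub (hB : IsPerfectDifferenceSet B) (ha : a ∈ B) (hb : b ∈ B) (hc : c ∈ B)
    (hd : d ∈ B) (h : a - b = c - d) (hab : a ≠ b) : a = c ∧ b = d := by
  have hcard := hB (a - b) (sub_ne_zero.mpr hab)
  rw [repFn2_image_neg] at hcard
  simpa using card_le_one.mp hcard.le (a, b) (by simp [ha, hb]) (c, d) (by simp [hc, hd, h])

theorem eq_or_eq_of_add_eq_add (hB : IsPerfectDifferenceSet B) (ha : a ∈ B) (hb : b ∈ B)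
    (hc : c ∈ B) (hd : d ∈ B) (h : a + b = c + d) : (a = c ∧ b = d) ∨ (a = d ∧ b = c) := by
  by_cases had : a = d
  · subst had
    exact Or.inr ⟨rfl, add_left_cancel (h.trans (add_comm c a))⟩
  · obtain ⟨hac, hdb⟩ := hB.eq_of_sub_eq_sub ha hd hc hb (sub_eq_sub_iff_add_eq_add.mpr h) had
    exact Or.inl ⟨hac, hdb.symm⟩

theorem card_mul_card_add_one [Fintype G] (hB : IsPerfectDifferenceSet B) :
    #B * #B + 1 = Fintype.card G + #B := by
  have hsum := sum_repFn2 B (B.image fun b => -b)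
  rw [card_image_of_injective _ neg_injective, ← add_sum_erase _ _ (mem_univ 0),
    sum_congr rfl fun g hg => hB g (ne_of_mem_erase hg), repFn2_image_neg_self_zero] at hsum
  simp only [sum_const, card_erase_of_mem (mem_univ _), card_univ, smul_eq_mul, mul_one] at hsum
  have : 0 < Fintype.card G := Fintype.card_pos
  omega

theorem eq_or_eq_swap_of_mem_filter_add_eq (hB : IsPerfectDifferenceSet B) {g : G}
    {x y : G × G} (hx : x ∈ {x ∈ B ×ˢ B | x.1 + x.2 = g}) (hy : y ∈ {x ∈ B ×ˢ B | x.1 + x.2 = g}) :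
    y = x ∨ y = x.swap := by
  simp only [mem_filter, mem_product] at hx hy
  rcases hB.eq_or_eq_of_add_eq_add hy.1.1 hy.1.2 hx.1.1 hx.1.2 (hy.2.trans hx.2.symm) with h | h
  · exact Or.inl (Prod.ext h.1 h.2)
  · exact Or.inr (Prod.ext h.1 h.2)

theorem repFn_le_two (hB : IsPerfectDifferenceSet B) (g : G) : repFn B g ≤ 2 := by
  rcases ({x ∈ B ×ˢ B | x.1 + x.2 = g}).eq_empty_or_nonempty with h | ⟨x, hx⟩
  · simp [repFn, repFn2, h]
  · calc repFn B g ≤ #{x, x.swap} := card_le_card fun y hy => by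
          rcases hB.eq_or_eq_swap_of_mem_filter_add_eq hx hy with rfl | rfl <;> simp
      _ ≤ 2 := card_le_two

theorem repFn_eq_one_iff (hB : IsPerfectDifferenceSet B) {g : G} :
    repFn B g = 1 ↔ ∃ b ∈ B, b + b = g := by
  constructor
  · intro h
    obtain ⟨x, hx⟩ := card_eq_one.mp h
    have hxmem : x ∈ {x ∈ B ×ˢ B | x.1 + x.2 = g} := hx ▸ mem_singleton_self x
    have hswap : x.swap = x := by
      simpa [hx] using swap_mem_filter_add_eq hxmem
    simp only [mem_filter, mem_product] at hxmem
    exact ⟨x.1, hxmem.1.1, by rw [← hxmem.2, ← congrArg Prod.fst hswap]; rfl⟩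
  · rintro ⟨b, hb, rfl⟩
    have hbb : (b, b) ∈ {x ∈ B ×ˢ B | x.1 + x.2 = b + b} := by simp [hb]
    refine card_eq_one.mpr ⟨(b, b), eq_singleton_iff_unique_mem.mpr ⟨hbb, fun y hy => ?_⟩⟩
    rcases hB.eq_or_eq_swap_of_mem_filter_add_eq hbb hy with h | h <;> exact h

theorem card_filter_repFn_eq_one [Fintype G] (hB : IsPerfectDifferenceSet B) :
    #{g | repFn B g = 1} = #B := by
  have himage : ({g | repFn B g = 1} : Finset G) = B.image fun b => b + b := by
    ext g
    simp [hB.repFn_eq_one_iff]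
  rw [himage]
  refine card_image_of_injOn fun b hb b' hb' h => ?_
  rcases hB.eq_or_eq_of_add_eq_add hb hb hb' hb' h with h | h <;> exact h.1

end IsPerfectDifferenceSet

theorem stmt_15 (p : ℕ) (hp : p.Prime) (B : Finset (ZMod (p ^ 2 + p + 1)))
    (hB : ∀ n : ZMod (p ^ 2 + p + 1), n ≠ 0 → repFn2 B (B.image fun b => -b) n = 1) :
    {n : ZMod (p ^ 2 + p + 1) | repFn B n = 1}.ncard = p + 1 ∧
    {n : ZMod (p ^ 2 + p + 1) | repFn B n = 2}.ncard = p * (p + 1) / 2 ∧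
    {n : ZMod (p ^ 2 + p + 1) | repFn B n = 0}.ncard = (p ^ 2 - p) / 2 := by
  have hB' : IsPerfectDifferenceSet B := hB
  have hle : ∀ n ∈ univ, repFn B n ≤ 2 := fun n _ => hB'.repFn_le_two n
  have hcard : #B = p + 1 := by
    have h := hB'.card_mul_card_add_one
    rw [ZMod.card] at h
    have := hp.pos
    rcases lt_trichotomy #B (p + 1) with hlt | heq | hgt
    · nlinarith
    · exact heq
    · nlinarith
  have h1 := hB'.card_filter_repFn_eq_one
  have h12 := sum_eq_card_filter_eq_one_add_two_mul univ (repFn B) hle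
  have h012 := card_eq_card_filter_eq_zero_add_one_add_two univ (repFn B) hle
  rw [sum_repFn, hcard] at h12
  rw [card_univ, ZMod.card] at h012
  simp only [Set.ncard_eq_toFinset_card', Set.toFinset_ofPred]
  rw [h1, hcard] at h12 ⊢
  refine ⟨rfl, ?_, ?_⟩
  · have : #{n | repFn B n = 2} * 2 = p * (p + 1) := by nlinarith
    omega
  · have : #{n | repFn B n = 0} * 2 + p = p ^ 2 := by nlinarith
    omega
end

section
/- Let p be a prime, q = p² + p + 1, m = 2q, and let B ⊆ ℤ_q satisfy R_{B,−B}(n) = 1 for all nonzero n ∈ ℤ_q. For an integer l with 0 ≤ l ≤ q − 1, define A_l ⊆ ℤ_m as the union of {2b mod m : b ∈ B} and {2b + 2l + 1 mod m : b ∈ B}, where each residue b ∈ ℤ_q is represented by an integer. Then R_{A_l}(n) ≤ 4 for all n ∈ ℤ_m. -/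
open scoped Pointwise

namespace Finset
variable {G : Type*} [AddCommGroup G] [DecidableEq G]

lemma repFn2_eq_addConvolution (A B : Finset G) : repFn2 A B = A.addConvolution B := rfl

lemma addConvolution_comm (A B : Finset G) (x : G) :
    A.addConvolution B x = B.addConvolution A x :=
  card_equiv (Equiv.prodComm G G) (by simp [add_comm, and_comm])

lemma addConvolution_union_left_le (A B C : Finset G) (x : G) :
    (A ∪ B).addConvolution C x ≤ A.addConvolution C x + B.addConvolution C x := by
  simp only [addConvolution, union_product, filter_union]
  exact card_union_le _ _

lemma addConvolution_union_right_le (A B C : Finset G) (x : G) :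
    A.addConvolution (B ∪ C) x ≤ A.addConvolution B x + A.addConvolution C x := by
  simp only [addConvolution, product_union, filter_union]
  exact card_union_le _ _

lemma addConvolution_vadd_vadd (A B : Finset G) (s t x : G) :
    (s +ᵥ A).addConvolution (t +ᵥ B) x = A.addConvolution B (x - s - t) := by
  rw [vadd_addConvolution_eq_addConvolution_neg_add, addConvolution_comm,
    vadd_addConvolution_eq_addConvolution_neg_add, addConvolution_comm]
  congr 1; abel

lemma addConvolution_image_apply {H : Type*} [AddCommGroup H] [DecidableEq H] (f : G →+ H)
    (hf : Function.Injective f) (A B : Finset G) (x : G) :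
    (A.image f).addConvolution (B.image f) (f x) = A.addConvolution B x := by
  simp only [addConvolution]
  rw [← card_image_of_injective _ (hf.prodMap hf)]
  congr 1
  ext ⟨u, v⟩
  simp only [mem_filter, mem_product, mem_image, Prod.map, Prod.mk.injEq, Prod.exists]
  constructor
  · rintro ⟨⟨⟨a, ha, rfl⟩, ⟨b, hb, rfl⟩⟩, h⟩
    exact ⟨a, b, ⟨⟨ha, hb⟩, hf (by simpa using h)⟩, rfl, rfl⟩
  · rintro ⟨a, b, ⟨⟨ha, hb⟩, rfl⟩, rfl, rfl⟩
    exact ⟨⟨⟨a, ha, rfl⟩, ⟨b, hb, rfl⟩⟩, (map_add f a b).symm⟩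

lemma addConvolution_image_eq_zero {H : Type*} [AddCommGroup H] [DecidableEq H] (f : G →+ H)
    (A B : Finset G) {y : H} (hy : y ∉ Set.range f) :
    (A.image f).addConvolution (B.image f) y = 0 := by
  rw [addConvolution_eq_zero, ← image_add]
  simp only [mem_image, not_exists, not_and]
  exact fun x _ hx => hy ⟨x, hx⟩

lemma eq_and_eq_of_sub_eq_sub {B : Finset G} (hB : ∀ x ≠ 0, B.addConvolution (-B) x ≤ 1)
    {a b c d : G} (ha : a ∈ B) (hb : b ∈ B) (hc : c ∈ B) (hd : d ∈ B) (h : a - b = c - d)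
    (hab : a ≠ b) : a = c ∧ b = d := by
  have hle := hB (a - b) (sub_ne_zero.mpr hab)
  rw [← card_sub_eq] at hle
  simpa using card_le_one.mp hle (a, b) (by simp [ha, hb]) (c, d) (by simp [hc, hd, h])

lemma addConvolution_self_le_two {B : Finset G}
    (hB : ∀ x ≠ 0, B.addConvolution (-B) x ≤ 1) (s : G) : B.addConvolution B s ≤ 2 := by
  rcases (B ×ˢ B).filter (fun ab => ab.1 + ab.2 = s) |>.eq_empty_or_nonempty
    with h | ⟨⟨a, b⟩, hab⟩
  · simp [addConvolution, h]
  simp only [mem_filter, mem_product] at hab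
  obtain ⟨⟨ha, hb⟩, rfl⟩ := hab
  calc B.addConvolution B (a + b) ≤ #{(a, b), (b, a)} := by
        refine card_le_card fun ⟨c, d⟩ hcd => ?_
        simp only [mem_filter, mem_product] at hcd
        obtain ⟨⟨hc, hd⟩, hsum⟩ := hcd
        by_cases hac : a = c
        · subst hac
          simp [add_left_cancel hsum.symm]
        · have hdiff : a - c = d - b := by rw [sub_eq_sub_iff_add_eq_add, ← hsum, add_comm]
          obtain ⟨rfl, rfl⟩ := eq_and_eq_of_sub_eq_sub hB ha hc hd hb hdiff hac
          simp
    _ ≤ 2 := card_le_two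

lemma addConvolution_image_self_le_two {H : Type*} [AddCommGroup H] [DecidableEq H]
    {f : G →+ H} (hf : Function.Injective f) {B : Finset G}
    (hB : ∀ x ≠ 0, B.addConvolution (-B) x ≤ 1) (y : H) :
    (B.image f).addConvolution (B.image f) y ≤ 2 := by
  by_cases hy : y ∈ Set.range f
  · obtain ⟨x, rfl⟩ := hy
    rw [addConvolution_image_apply f hf]
    exact addConvolution_self_le_two hB x
  · rw [addConvolution_image_eq_zero f B B hy]
    omega

lemma addConvolution_union_vadd_le_four (π : G →+ ZMod 2) {X : Finset G}
    (hle : ∀ x, X.addConvolution X x ≤ 2)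
    (hodd : ∀ x, π x ≠ 0 → X.addConvolution X x = 0)
    {c : G} (hc : π c = 1) (x : G) :
    (X ∪ (c +ᵥ X)).addConvolution (X ∪ (c +ᵥ X)) x ≤ 4 := by
  calc (X ∪ (c +ᵥ X)).addConvolution (X ∪ (c +ᵥ X)) x
      ≤ X.addConvolution X x + X.addConvolution (c +ᵥ X) x +
          ((c +ᵥ X).addConvolution X x + (c +ᵥ X).addConvolution (c +ᵥ X) x) :=
        (addConvolution_union_left_le _ _ _ x).trans
          (add_le_add (addConvolution_union_right_le _ _ _ x)
            (addConvolution_union_right_le _ _ _ x))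
    _ = X.addConvolution X x + X.addConvolution X (-c + x) +
          (X.addConvolution X (-c + x) + X.addConvolution X (x - c - c)) := by
        rw [addConvolution_comm X (c +ᵥ X), vadd_addConvolution_eq_addConvolution_neg_add,
          addConvolution_vadd_vadd]
    _ ≤ 4 := by
        rcases (by decide : ∀ e : ZMod 2, e = 0 ∨ e = 1) (π x) with h | h
        · have hshift : π (-c + x) ≠ 0 := by simp [h, hc]
          linarith [hle x, hle (x - c - c), hodd _ hshift]
        · have hx : π x ≠ 0 := by simp [h]
          have hshift : π (x - c - c) ≠ 0 := by simp [h, hc]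
          linarith [hle (-c + x), hodd _ hx, hodd _ hshift]

end Finset

namespace ZMod
variable (k n : ℕ) [NeZero n]

def scaleHom : ZMod n →+ ZMod (k * n) where
  toFun b := ((k * b.val : ℕ) : ZMod (k * n))
  map_zero' := by simp
  map_add' a b := by
    rw [← Nat.cast_add, ← mul_add, natCast_eq_natCast_iff', val_add, Nat.mul_mod_mul_left,
      Nat.mul_mod_mul_left, Nat.mod_mod]

lemma scaleHom_apply (b : ZMod n) : scaleHom k n b = ((k * b.val : ℕ) : ZMod (k * n)) := rfl

variable {k} in
lemma scaleHom_injective (hk : k ≠ 0) : Function.Injective (scaleHom k n) := by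
  intro a b h
  rw [scaleHom_apply, scaleHom_apply, natCast_eq_natCast_iff', Nat.mul_mod_mul_left,
    Nat.mul_mod_mul_left, Nat.mod_eq_of_lt a.val_lt, Nat.mod_eq_of_lt b.val_lt] at h
  exact val_injective n (Nat.eq_of_mul_eq_mul_left (Nat.pos_of_ne_zero hk) h)

lemma castHom_scaleHom (b : ZMod n) :
    castHom (dvd_mul_right k n) (ZMod k) (scaleHom k n b) = 0 := by
  simp [scaleHom_apply]

end ZMod

open Finset in
theorem stmt_16_general (p : ℕ) (B : Finset (ZMod (p ^ 2 + p + 1)))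
    (hB : ∀ n : ZMod (p ^ 2 + p + 1), n ≠ 0 → repFn2 B (B.image fun b => -b) n = 1)
    (l : ℕ) :
    ∀ n : ZMod (2 * (p ^ 2 + p + 1)),
      repFn ((B.image fun b => ((2 * b.val : ℕ) : ZMod (2 * (p ^ 2 + p + 1)))) ∪
             (B.image fun b => ((2 * b.val + 2 * l + 1 : ℕ) : ZMod (2 * (p ^ 2 + p + 1))))) n
        ≤ 4 := by
  set φ := ZMod.scaleHom 2 (p ^ 2 + p + 1)
  set c : ZMod (2 * (p ^ 2 + p + 1)) := ((2 * l + 1 : ℕ) : ZMod (2 * (p ^ 2 + p + 1)))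
  have hY : (B.image fun b => ((2 * b.val + 2 * l + 1 : ℕ) : ZMod (2 * (p ^ 2 + p + 1)))) =
      c +ᵥ B.image φ := by
    rw [← image_vadd, image_image]
    refine image_congr fun b _ => ?_
    simp only [Function.comp_apply, vadd_eq_add, c, φ, ZMod.scaleHom_apply]
    push_cast
    ring
  have hφ : ∀ b, ((2 * b.val : ℕ) : ZMod (2 * (p ^ 2 + p + 1))) = φ b := fun _ => rfl
  set π := (ZMod.castHom (dvd_mul_right 2 (p ^ 2 + p + 1)) (ZMod 2)).toAddMonoidHom
  have hπc : π c = 1 := by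
    simp only [π, c, RingHom.toAddMonoidHom_eq_coe, AddMonoidHom.coe_coe, map_natCast]
    rw [Nat.cast_succ, Nat.cast_mul, ZMod.natCast_self, zero_mul, zero_add]
  have hπφ : ∀ x, π x ≠ 0 → x ∉ Set.range φ := by
    rintro x hx ⟨y, rfl⟩
    exact hx (ZMod.castHom_scaleHom 2 _ y)
  simp only [repFn, repFn2_eq_addConvolution, image_neg_eq_neg, hφ, hY] at hB ⊢
  exact addConvolution_union_vadd_le_four π
    (addConvolution_image_self_le_two (ZMod.scaleHom_injective _ two_ne_zero)
      fun x hx => (hB x hx).le)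
    (fun x hx => addConvolution_image_eq_zero φ B B (hπφ x hx)) hπc

theorem stmt_16 (p : ℕ) (hp : p.Prime) (B : Finset (ZMod (p ^ 2 + p + 1)))
    (hB : ∀ n : ZMod (p ^ 2 + p + 1), n ≠ 0 → repFn2 B (B.image fun b => -b) n = 1)
    (l : ℕ) (hl : l ≤ p ^ 2 + p) :
    ∀ n : ZMod (2 * (p ^ 2 + p + 1)),
      repFn ((B.image fun b => ((2 * b.val : ℕ) : ZMod (2 * (p ^ 2 + p + 1)))) ∪
             (B.image fun b => ((2 * b.val + 2 * l + 1 : ℕ) : ZMod (2 * (p ^ 2 + p + 1))))) n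
        ≤ 4 :=
  stmt_16_general p B hB l
end
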